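/- arXiv:2002.02766 — 2 statements merged into one kernel-verified Lean document; each statement's English description precedes it below -/
import Mathlib

section
/- Maximum principle (Theorem 'Milne theorem 3'): There exists ε₀ ∈ (0,1), depending only on R₁, R₂ and n, such that for every ε ∈ (0, ε₀], every bounded in-flow data h, and every classical solution f of the ε-Milne problem with geometric correction with data h and source S ≡ 0, one has inf{h(φ,ψ) : sin φ > 0} ≤ f(η,φ,ψ) ≤ sup{h(φ,ψ) : sin φ > 0} for all (η,φ,ψ) ∈ D. -/
/-!
Let `M` be the maximum of `f` on the compact domain, attained at `q`. At a maximum the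
`φ`-transport term `F cos φ ∂φ f` vanishes, and unless `q` is an incoming point of the wall
`η = 0`, also `sin φ ∂η f ≥ 0` there (at `η = L` after a specular reflection). The equation then
gives `f̄(η) ≥ M`, so `f ≡ M` on that slice. On the normal ray `φ = π/2` the equation reduces to
`∂η f = f̄ - f ≤ M - f`, and a backward Grönwall argument carries the value `M` to the in-flow
point `(0, π/2, 0)`. Hence `M` is an in-flow value; the lower bound is the same statement for
`-f`. Smallness of `ε` is only used to keep `R₁ - εη` and `R₂ - εη` positive, so that `F` is
continuous and the equation extends by continuity to the whole closed domain.
-/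

noncomputable section

open Real Set MeasureTheory

namespace MilneStmt

/-- The boundary-layer thickness `L = ε^(-n)`. -/
def layerL (ε n : ℝ) : ℝ := ε ^ (-n)

/-- The geometric force `F(η,ψ)`. -/
def force (R₁ R₂ ε η ψ : ℝ) : ℝ :=
  -ε * (Real.sin ψ ^ 2 / (R₁ - ε * η) + Real.cos ψ ^ 2 / (R₂ - ε * η))

/-- The domain `D = [0,L] × [-π/2, π/2] × [-π, π]` of the variables `(η, φ, ψ)`. -/
def milneDomain (L : ℝ) : Set (ℝ × ℝ × ℝ) :=
  Icc (0 : ℝ) L ×ˢ Icc (-(π / 2)) (π / 2) ×ˢ Icc (-π) π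

/-- The in-flow set `{(φ,ψ) : sin φ > 0, ψ ∈ [-π,π]}` (with `φ` in the velocity range). -/
def inflowSet : Set (ℝ × ℝ) :=
  {q | 0 < Real.sin q.1 ∧ q.1 ∈ Icc (-(π / 2)) (π / 2) ∧ q.2 ∈ Icc (-π) π}

/-- The angular average `f̄(η)`. -/
def angAvg (f : ℝ × ℝ × ℝ → ℝ) (η : ℝ) : ℝ :=
  (1 / (4 * π)) * ∫ ψ in (-π)..π, ∫ φ in (-(π / 2))..(π / 2), f (η, φ, ψ) * Real.cos φ

/-- Partial derivative in `η`. -/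
def dEta (g : ℝ × ℝ × ℝ → ℝ) (p : ℝ × ℝ × ℝ) : ℝ :=
  deriv (fun t => g (t, p.2.1, p.2.2)) p.1

/-- Partial derivative in `φ`. -/
def dPhi (g : ℝ × ℝ × ℝ → ℝ) (p : ℝ × ℝ × ℝ) : ℝ :=
  deriv (fun t => g (p.1, t, p.2.2)) p.2.1

/-- Partial derivative in `ψ`. -/
def dPsi (g : ℝ × ℝ × ℝ → ℝ) (p : ℝ × ℝ × ℝ) : ℝ :=
  deriv (fun t => g (p.1, p.2.1, t)) p.2.2

/-- A classical solution of the ε-Milne problem with geometric correction,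
with in-flow data `h` and source `S`. -/
structure IsMilneSolution (R₁ R₂ ε n : ℝ) (h : ℝ → ℝ → ℝ) (S : ℝ × ℝ × ℝ → ℝ)
    (f : ℝ × ℝ × ℝ → ℝ) : Prop where
  smooth : ContDiffOn ℝ 1 f (milneDomain (layerL ε n))
  eqn : ∀ p ∈ interior (milneDomain (layerL ε n)),
    Real.sin p.2.1 * dEta f p + force R₁ R₂ ε p.1 p.2.2 * Real.cos p.2.1 * dPhi f p
      + f p - angAvg f p.1 = S p
  inflow : ∀ q ∈ inflowSet, f (0, q.1, q.2) = h q.1 q.2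
  reflect : ∀ φ ψ : ℝ, f (layerL ε n, φ, ψ) = f (layerL ε n, -φ, ψ)

/-- The weighted `L²` norm on `D`. -/
def l2Norm (L : ℝ) (g : ℝ × ℝ × ℝ → ℝ) : ℝ :=
  Real.sqrt (∫ η in (0 : ℝ)..L, ∫ ψ in (-π)..π, ∫ φ in (-(π / 2))..(π / 2),
    g (η, φ, ψ) ^ 2 * Real.cos φ)

/-- The `L^∞` norm (sup over `D`). -/
def linfNorm (L : ℝ) (g : ℝ × ℝ × ℝ → ℝ) : ℝ :=
  ⨆ p ∈ milneDomain L, |g p|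

/-- The `L^∞` norm over the in-flow boundary. -/
def inflowLinf (g : ℝ → ℝ → ℝ) : ℝ :=
  ⨆ q ∈ inflowSet, |g q.1 q.2|

/-- The limit value `f_L = (3/(4π)) ∫∫ f(L,φ,ψ) sin²φ cos φ dφ dψ`. -/
def limitValue (L : ℝ) (f : ℝ × ℝ × ℝ → ℝ) : ℝ :=
  (3 / (4 * π)) * ∫ ψ in (-π)..π, ∫ φ in (-(π / 2))..(π / 2),
    f (L, φ, ψ) * Real.sin φ ^ 2 * Real.cos φ

/-- The data bounds with constants `K` and `M` for in-flow data `h` and source `S`. -/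
structure DataBounds (K M L : ℝ) (h : ℝ → ℝ → ℝ) (S : ℝ × ℝ × ℝ → ℝ) : Prop where
  hSmooth : ContDiffOn ℝ 1 (fun q : ℝ × ℝ => h q.1 q.2) inflowSet
  hBound : ∀ q ∈ inflowSet,
    |h q.1 q.2| + |deriv (fun t => h t q.2) q.1| + |deriv (fun t => h q.1 t) q.2| ≤ M
  sSmooth : ContDiffOn ℝ 1 S (milneDomain L)
  sBound : ∀ p ∈ milneDomain L,
    Real.exp (K * p.1) * (|S p| + |dEta S p| + |dPhi S p| + |dPsi S p|) ≤ M

end MilneStmt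

theorem ContinuousOn.exists_continuous_eqOn {X : Type*} [TopologicalSpace X] [NormalSpace X]
    {s : Set X} {f : X → ℝ} (hs : IsClosed s) (hf : ContinuousOn f s) :
    ∃ g : X → ℝ, Continuous g ∧ EqOn g f s := by
  obtain ⟨g, hg⟩ := ContinuousMap.exists_restrict_eq hs ⟨s.domRestrict f, hf.domRestrict⟩
  exact ⟨g, g.continuous, fun x hx => congr($hg ⟨x, hx⟩)⟩

theorem IsMaxOn.fderivWithin_sub_nonpos {E : Type*} [NormedAddCommGroup E] [NormedSpace ℝ E]
    {f : E → ℝ} {s : Set E} {a b : E} (hs : Convex ℝ s) (h : IsMaxOn f s a) (ha : a ∈ s)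
    (hb : b ∈ s) : fderivWithin ℝ f s a (b - a) ≤ 0 :=
  h.localize.fderivWithin_nonpos
    (sub_mem_posTangentConeAt_of_segment_subset (hs.segment_subset ha hb))

theorem eqOn_zero_of_intervalIntegral_eq_zero {g : ℝ → ℝ} {a b : ℝ} (hab : a < b)
    (hg : ContinuousOn g (Icc a b)) (hnonneg : ∀ x ∈ Icc a b, 0 ≤ g x)
    (hint : ∫ x in a..b, g x = 0) : EqOn g 0 (Icc a b) := by
  intro c hc
  by_contra hne
  have hpos := intervalIntegral.integral_pos hab hg (fun x hx => hnonneg x (Ioc_subset_Icc_self hx))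
    ⟨c, hc, (hnonneg c hc).lt_of_ne' hne⟩
  exact hpos.ne' hint

theorem le_of_hasDerivAt_le_const_sub {g g' : ℝ → ℝ} {a b M : ℝ} (hab : a ≤ b)
    (hg : ContinuousOn g (Icc a b)) (hderiv : ∀ t ∈ Ioo a b, HasDerivAt g (g' t) t)
    (hbound : ∀ t ∈ Ioo a b, g' t ≤ M - g t) (hb : M ≤ g b) : M ≤ g a := by
  have hmono : MonotoneOn (fun t => (M - g t) * exp t) (Icc a b) := by
    refine monotoneOn_of_hasDerivWithinAt_nonneg (convex_Icc a b)
      ((continuousOn_const.sub hg).mul continuous_exp.continuousOn) (fun t ht => ?_)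
      (fun t ht => ?_)
      (f' := fun t => -g' t * exp t + (M - g t) * exp t)
    · rw [interior_Icc] at ht
      exact (((hderiv t ht).const_sub M).mul (hasDerivAt_exp t)).hasDerivWithinAt
    · rw [interior_Icc] at ht
      have := hbound t ht
      have := exp_pos t
      nlinarith
  have := hmono (left_mem_Icc.mpr hab) (right_mem_Icc.mpr hab) hab
  have := exp_pos a
  have := exp_pos b
  nlinarith

namespace MilneStmt

theorem interior_milneDomain (L : ℝ) :
    interior (milneDomain L) = Ioo 0 L ×ˢ Ioo (-(π / 2)) (π / 2) ×ˢ Ioo (-π) π := by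
  simp only [milneDomain, interior_prod_eq, interior_Icc]

theorem closure_interior_milneDomain {L : ℝ} (hL : 0 < L) :
    closure (interior (milneDomain L)) = milneDomain L := by
  have := pi_pos
  rw [interior_milneDomain, closure_prod_eq, closure_prod_eq, closure_Ioo hL.ne,
    closure_Ioo (by linarith), closure_Ioo (by linarith), milneDomain]

theorem isCompact_milneDomain (L : ℝ) : IsCompact (milneDomain L) :=
  isCompact_Icc.prod (isCompact_Icc.prod isCompact_Icc)

theorem convex_milneDomain (L : ℝ) : Convex ℝ (milneDomain L) :=
  (convex_Icc _ _).prod ((convex_Icc _ _).prod (convex_Icc _ _))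

theorem uniqueDiffOn_milneDomain {L : ℝ} (hL : 0 < L) : UniqueDiffOn ℝ (milneDomain L) := by
  have := pi_pos
  refine uniqueDiffOn_convex (convex_milneDomain L) ?_
  rw [interior_milneDomain]
  exact (nonempty_Ioo.mpr hL).prod
    ((nonempty_Ioo.mpr (by linarith)).prod (nonempty_Ioo.mpr (by linarith)))

theorem normal_mem_milneDomain {L η : ℝ} (hη : η ∈ Icc 0 L) : (η, π / 2, 0) ∈ milneDomain L := by
  have := pi_pos
  exact ⟨hη, ⟨by linarith, le_rfl⟩, ⟨by linarith, by linarith⟩⟩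

theorem normal_mem_inflowSet : (π / 2, 0) ∈ inflowSet := by
  have := pi_pos
  exact ⟨by simp, ⟨by linarith, le_rfl⟩, ⟨by linarith, by linarith⟩⟩

section AngularAverage

variable {L η M : ℝ} {f g : ℝ × ℝ × ℝ → ℝ}

theorem angAvg_congr (hfg : EqOn f g (milneDomain L)) (hη : η ∈ Icc 0 L) :
    angAvg f η = angAvg g η := by
  have := pi_pos
  unfold angAvg
  congr 1
  refine intervalIntegral.integral_congr fun ψ hψ => intervalIntegral.integral_congr fun φ hφ => ?_
  rw [uIcc_of_le (by linarith)] at hψ hφ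
  rw [hfg (show (η, φ, ψ) ∈ milneDomain L from ⟨hη, hφ, hψ⟩)]

theorem continuous_angAvg (hg : Continuous g) : Continuous (angAvg g) := by
  unfold angAvg
  fun_prop

theorem angAvg_nonneg (hη : η ∈ Icc 0 L) (hf : ∀ p ∈ milneDomain L, 0 ≤ f p) :
    0 ≤ angAvg f η := by
  have := pi_pos
  refine mul_nonneg (by positivity) (intervalIntegral.integral_nonneg (by linarith) fun ψ hψ =>
    intervalIntegral.integral_nonneg (by linarith) fun φ hφ => ?_)
  exact mul_nonneg (hf _ ⟨hη, hφ, hψ⟩) (cos_nonneg_of_mem_Icc hφ)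

theorem angAvg_const_sub (hg : Continuous g) (M η : ℝ) :
    angAvg (fun p => M - g p) η = M - angAvg g η := by
  have := pi_pos
  have hinner : ∀ ψ, ∫ φ in (-(π / 2))..(π / 2), (M - g (η, φ, ψ)) * cos φ
      = 2 * M - ∫ φ in (-(π / 2))..(π / 2), g (η, φ, ψ) * cos φ := by
    intro ψ
    simp only [sub_mul]
    rw [intervalIntegral.integral_sub (Continuous.intervalIntegrable (by fun_prop) _ _)
      (Continuous.intervalIntegrable (by fun_prop) _ _), intervalIntegral.integral_const_mul,
      integral_cos]
    simp
    ring
  unfold angAvg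
  simp only [hinner]
  rw [intervalIntegral.integral_sub intervalIntegrable_const
    (Continuous.intervalIntegrable (by fun_prop) _ _)]
  simp
  field_simp
  ring

theorem eqOn_zero_of_angAvg_eq_zero (hg : Continuous g) (hη : η ∈ Icc 0 L)
    (hnonneg : ∀ p ∈ milneDomain L, 0 ≤ g p) (hzero : angAvg g η = 0) :
    ∀ φ ∈ Icc (-(π / 2)) (π / 2), ∀ ψ ∈ Icc (-π) π, g (η, φ, ψ) = 0 := by
  have := pi_pos
  have houter := eqOn_zero_of_intervalIntegral_eq_zero (g := fun ψ =>
      ∫ φ in (-(π / 2))..(π / 2), g (η, φ, ψ) * cos φ) (by linarith)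
    (Continuous.continuousOn (by fun_prop))
    (fun ψ hψ => intervalIntegral.integral_nonneg (by linarith) fun φ hφ =>
      mul_nonneg (hnonneg _ ⟨hη, hφ, hψ⟩) (cos_nonneg_of_mem_Icc hφ))
    (by simpa [angAvg, pi_pos.ne'] using hzero)
  intro φ hφ ψ hψ
  have hinner := eqOn_zero_of_intervalIntegral_eq_zero (g := fun φ => g (η, φ, ψ) * cos φ)
    (by linarith) (by fun_prop) (fun φ hφ => mul_nonneg (hnonneg _ ⟨hη, hφ, hψ⟩)
      (cos_nonneg_of_mem_Icc hφ)) (houter hψ)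
  -- `cos` vanishes at `±π/2`, so the endpoints are reached by continuity
  have hIoo : EqOn (fun φ => g (η, φ, ψ)) 0 (Ioo (-(π / 2)) (π / 2)) := fun φ hφ' =>
    (mul_eq_zero.mp (hinner (Ioo_subset_Icc_self hφ'))).resolve_right (cos_pos_of_mem_Ioo hφ').ne'
  have := hIoo.closure (by fun_prop) continuous_const
  rw [closure_Ioo (by linarith)] at this
  exact this hφ

theorem continuousOn_angAvg (hf : ContinuousOn f (milneDomain L)) :
    ContinuousOn (angAvg f) (Icc 0 L) := by
  obtain ⟨g, hg, hgf⟩ := hf.exists_continuous_eqOn (isCompact_milneDomain L).isClosed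
  exact (continuous_angAvg hg).continuousOn.congr fun η hη => angAvg_congr hgf.symm hη

theorem angAvg_le (hf : ContinuousOn f (milneDomain L)) (hM : ∀ p ∈ milneDomain L, f p ≤ M)
    (hη : η ∈ Icc 0 L) : angAvg f η ≤ M := by
  obtain ⟨g, hg, hgf⟩ := hf.exists_continuous_eqOn (isCompact_milneDomain L).isClosed
  have := angAvg_nonneg (f := fun p => M - g p) hη fun p hp => by simp [hgf hp, hM p hp]
  rw [angAvg_const_sub hg, angAvg_congr hgf hη] at this
  linarith

theorem eq_of_le_angAvg (hf : ContinuousOn f (milneDomain L)) (hM : ∀ p ∈ milneDomain L, f p ≤ M)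
    (hη : η ∈ Icc 0 L) (hle : M ≤ angAvg f η) :
    ∀ φ ∈ Icc (-(π / 2)) (π / 2), ∀ ψ ∈ Icc (-π) π, f (η, φ, ψ) = M := by
  obtain ⟨g, hg, hgf⟩ := hf.exists_continuous_eqOn (isCompact_milneDomain L).isClosed
  have hzero : angAvg (fun p => M - g p) η = 0 := by
    rw [angAvg_const_sub hg, angAvg_congr hgf hη]
    linarith [angAvg_le hf hM hη]
  intro φ hφ ψ hψ
  have hp : (η, φ, ψ) ∈ milneDomain L := ⟨hη, hφ, hψ⟩
  have : M - g (η, φ, ψ) = 0 := eqOn_zero_of_angAvg_eq_zero (continuous_const.sub hg) hη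
    (fun p hp => by simp [hgf hp, hM p hp]) hzero φ hφ ψ hψ
  rw [hgf hp] at this
  linarith

end AngularAverage

section Derivatives

variable {f : ℝ × ℝ × ℝ → ℝ} {f' : ℝ × ℝ × ℝ →L[ℝ] ℝ} {q : ℝ × ℝ × ℝ}

theorem _root_.HasFDerivWithinAt.hasDerivWithinAt_eta {s : Set (ℝ × ℝ × ℝ)} {I : Set ℝ}
    (hf : HasFDerivWithinAt f f' s q) (hI : MapsTo (fun t => (t, q.2.1, q.2.2)) I s) :
    HasDerivWithinAt (fun t => f (t, q.2.1, q.2.2)) (f' (1, 0, 0)) I q.1 :=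
  hf.comp_hasDerivWithinAt q.1 ((hasDerivAt_id _).prodMk (hasDerivAt_const _ _)).hasDerivWithinAt hI

theorem _root_.HasFDerivAt.dEta_eq (hf : HasFDerivAt f f' q) : dEta f q = f' (1, 0, 0) :=
  (hf.comp_hasDerivAt q.1 ((hasDerivAt_id _).prodMk (hasDerivAt_const _ _))).deriv

theorem _root_.HasFDerivAt.dPhi_eq (hf : HasFDerivAt f f' q) : dPhi f q = f' (0, 1, 0) :=
  (hf.comp_hasDerivAt q.2.1 ((hasDerivAt_const _ _).prodMk
    ((hasDerivAt_id _).prodMk (hasDerivAt_const _ _)))).deriv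

variable {L : ℝ}

theorem _root_.IsMaxOn.mul_fderivWithin_eta_nonpos (h : IsMaxOn f (milneDomain L) q)
    (hq : q ∈ milneDomain L) {η : ℝ} (hη : η ∈ Icc 0 L) :
    (η - q.1) * fderivWithin ℝ f (milneDomain L) q (1, 0, 0) ≤ 0 := by
  have := h.fderivWithin_sub_nonpos (convex_milneDomain L) hq (b := (η, q.2.1, q.2.2))
    ⟨hη, hq.2⟩
  rwa [show (η, q.2.1, q.2.2) - q = (η - q.1) • ((1 : ℝ), (0 : ℝ), (0 : ℝ)) by
    ext <;> simp, map_smul, smul_eq_mul] at this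

theorem _root_.IsMaxOn.mul_fderivWithin_phi_nonpos (h : IsMaxOn f (milneDomain L) q)
    (hq : q ∈ milneDomain L) {φ : ℝ} (hφ : φ ∈ Icc (-(π / 2)) (π / 2)) :
    (φ - q.2.1) * fderivWithin ℝ f (milneDomain L) q (0, 1, 0) ≤ 0 := by
  have := h.fderivWithin_sub_nonpos (convex_milneDomain L) hq (b := (q.1, φ, q.2.2))
    ⟨hq.1, hφ, hq.2.2⟩
  rwa [show (q.1, φ, q.2.2) - q = (φ - q.2.1) • ((0 : ℝ), (1 : ℝ), (0 : ℝ)) by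
    ext <;> simp, map_smul, smul_eq_mul] at this

theorem _root_.IsMaxOn.cos_mul_fderivWithin_phi_eq_zero (h : IsMaxOn f (milneDomain L) q)
    (hq : q ∈ milneDomain L) : cos q.2.1 * fderivWithin ℝ f (milneDomain L) q (0, 1, 0) = 0 := by
  have := pi_pos
  obtain ⟨hlo, hhi⟩ := hq.2.1
  have h₁ := h.mul_fderivWithin_phi_nonpos hq (φ := π / 2) ⟨by linarith, le_rfl⟩
  have h₂ := h.mul_fderivWithin_phi_nonpos hq (φ := -(π / 2)) ⟨le_rfl, by linarith⟩
  rcases hlo.eq_or_lt with hlo | hlo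
  · simp [← hlo]
  rcases hhi.eq_or_lt with hhi | hhi
  · simp [hhi]
  have : fderivWithin ℝ f (milneDomain L) q (0, 1, 0) = 0 := by nlinarith
  simp [this]

theorem _root_.IsMaxOn.sin_mul_fderivWithin_eta_nonneg (h : IsMaxOn f (milneDomain L) q)
    (hq : q ∈ milneDomain L) (hL : 0 < L) (h₀ : q.1 = 0 → sin q.2.1 ≤ 0)
    (h_L : q.1 = L → 0 ≤ sin q.2.1) :
    0 ≤ sin q.2.1 * fderivWithin ℝ f (milneDomain L) q (1, 0, 0) := by
  obtain ⟨hlo, hhi⟩ := hq.1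
  have h₁ := h.mul_fderivWithin_eta_nonpos hq (η := L) ⟨hL.le, le_rfl⟩
  have h₂ := h.mul_fderivWithin_eta_nonpos hq (η := 0) ⟨le_rfl, hL.le⟩
  rcases hlo.eq_or_lt with hlo | hlo
  · have := h₀ hlo.symm
    rw [← hlo] at h₁
    nlinarith
  rcases hhi.eq_or_lt with hhi | hhi
  · have := h_L hhi
    rw [hhi] at h₂
    nlinarith
  have : fderivWithin ℝ f (milneDomain L) q (1, 0, 0) = 0 := by nlinarith
  simp [this]

end Derivatives

section Solution

variable {R₁ R₂ ε n : ℝ} {h : ℝ → ℝ → ℝ} {S f : ℝ × ℝ × ℝ → ℝ}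

theorem IsMilneSolution.fderivWithin_eqn (hL : 0 < layerL ε n)
    (hF : ContinuousOn (fun p : ℝ × ℝ × ℝ => force R₁ R₂ ε p.1 p.2.2) (milneDomain (layerL ε n)))
    (hS : ContinuousOn S (milneDomain (layerL ε n))) (hf : IsMilneSolution R₁ R₂ ε n h S f) :
    ∀ q ∈ milneDomain (layerL ε n),
      sin q.2.1 * fderivWithin ℝ f (milneDomain (layerL ε n)) q (1, 0, 0)
        + force R₁ R₂ ε q.1 q.2.2 * cos q.2.1
          * fderivWithin ℝ f (milneDomain (layerL ε n)) q (0, 1, 0)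
        + f q - angAvg f q.1 = S q := by
  set D := milneDomain (layerL ε n)
  have hA : ContinuousOn (fderivWithin ℝ f D) D :=
    hf.smooth.continuousOn_fderivWithin (uniqueDiffOn_milneDomain hL) le_rfl
  have hAvg : ContinuousOn (fun q : ℝ × ℝ × ℝ => angAvg f q.1) D :=
    (continuousOn_angAvg hf.smooth.continuousOn).comp continuousOn_fst fun q hq => hq.1
  have hfc : ContinuousOn f D := hf.smooth.continuousOn
  refine EqOn.of_subset_closure (s := interior D) (fun q hq => ?_) ?_ hS interior_subset
    (closure_interior_milneDomain hL).superset
  · have hdiff : HasFDerivAt f (fderivWithin ℝ f D q) q :=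
      (hf.smooth.differentiableOn one_ne_zero q (interior_subset hq)).hasFDerivWithinAt.hasFDerivAt
        (mem_interior_iff_mem_nhds.mp hq)
    rw [← hdiff.dEta_eq, ← hdiff.dPhi_eq]
    exact hf.eqn q hq
  · fun_prop

variable {q : ℝ × ℝ × ℝ}

theorem IsMilneSolution.le_angAvg_of_isMaxOn (hL : 0 < layerL ε n)
    (hF : ContinuousOn (fun p : ℝ × ℝ × ℝ => force R₁ R₂ ε p.1 p.2.2) (milneDomain (layerL ε n)))
    (hf : IsMilneSolution R₁ R₂ ε n h (fun _ => 0) f)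
    (hq : q ∈ milneDomain (layerL ε n)) (hmax : IsMaxOn f (milneDomain (layerL ε n)) q)
    (h₀ : q.1 = 0 → sin q.2.1 ≤ 0) (h_L : q.1 = layerL ε n → 0 ≤ sin q.2.1) :
    f q ≤ angAvg f q.1 := by
  have heqn := hf.fderivWithin_eqn hL hF continuousOn_const q hq
  rw [mul_assoc _ (cos _), hmax.cos_mul_fderivWithin_phi_eq_zero hq, mul_zero] at heqn
  linarith [hmax.sin_mul_fderivWithin_eta_nonneg hq hL h₀ h_L]

theorem IsMilneSolution.exists_le_angAvg_of_isMaxOn (hL : 0 < layerL ε n)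
    (hF : ContinuousOn (fun p : ℝ × ℝ × ℝ => force R₁ R₂ ε p.1 p.2.2) (milneDomain (layerL ε n)))
    (hf : IsMilneSolution R₁ R₂ ε n h (fun _ => 0) f) (hq : q ∈ milneDomain (layerL ε n))
    (hmax : IsMaxOn f (milneDomain (layerL ε n)) q) (hout : ¬(q.1 = 0 ∧ 0 < sin q.2.1)) :
    ∃ η ∈ Icc 0 (layerL ε n), f q ≤ angAvg f η := by
  refine ⟨q.1, hq.1, ?_⟩
  by_cases hrefl : q.1 = layerL ε n ∧ sin q.2.1 < 0
  · -- at `η = L` the specular reflection of `q` is a maximum point with `sin φ > 0`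
    have hfq' : f (q.1, -q.2.1, q.2.2) = f q := by rw [hrefl.1, ← hf.reflect, ← hrefl.1]
    have hq' : (q.1, -q.2.1, q.2.2) ∈ milneDomain (layerL ε n) :=
      ⟨hq.1, ⟨neg_le_neg hq.2.1.2, neg_le.mp hq.2.1.1⟩, hq.2.2⟩
    rw [← hfq']
    refine hf.le_angAvg_of_isMaxOn hL hF hq' (fun p hp => (hmax hp).trans_eq hfq'.symm)
      (fun h0 => absurd (h0.symm.trans hrefl.1) hL.ne) fun _ => ?_
    simpa [sin_neg] using hrefl.2.le
  · exact hf.le_angAvg_of_isMaxOn hL hF hq hmax (fun h0 => not_lt.mp fun hs => hout ⟨h0, hs⟩)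
      fun hLq => not_lt.mp fun hs => hrefl ⟨hLq, hs⟩

theorem IsMilneSolution.le_normal_inflow (hL : 0 < layerL ε n)
    (hF : ContinuousOn (fun p : ℝ × ℝ × ℝ => force R₁ R₂ ε p.1 p.2.2) (milneDomain (layerL ε n)))
    (hf : IsMilneSolution R₁ R₂ ε n h (fun _ => 0) f)
    {M η : ℝ} (hM : ∀ p ∈ milneDomain (layerL ε n), f p ≤ M) (hη : η ∈ Icc 0 (layerL ε n))
    (hMη : M ≤ f (η, π / 2, 0)) : M ≤ f (0, π / 2, 0) := by
  set D := milneDomain (layerL ε n)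
  refine le_of_hasDerivAt_le_const_sub (g := fun t => f (t, π / 2, 0))
    (g' := fun t => fderivWithin ℝ f D (t, π / 2, 0) (1, 0, 0)) hη.1
    (hf.smooth.continuousOn.comp (by fun_prop) fun t ht =>
      normal_mem_milneDomain ⟨ht.1, ht.2.trans hη.2⟩) (fun t ht => ?_) (fun t ht => ?_) hMη
  all_goals have htL : t ∈ Icc 0 (layerL ε n) := ⟨ht.1.le, ht.2.le.trans hη.2⟩
  · have hderiv := (hf.smooth.differentiableOn one_ne_zero _
      (normal_mem_milneDomain htL)).hasFDerivWithinAt.hasDerivWithinAt_eta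
      (I := Icc 0 (layerL ε n)) fun s hs => normal_mem_milneDomain hs
    exact hderiv.hasDerivAt (Icc_mem_nhds ht.1 (ht.2.trans_le hη.2))
  · have heqn := hf.fderivWithin_eqn hL hF continuousOn_const _ (normal_mem_milneDomain htL)
    simp only [sin_pi_div_two, cos_pi_div_two, one_mul, mul_zero, zero_mul, add_zero] at heqn
    linarith [angAvg_le hf.smooth.continuousOn hM htL]

theorem IsMilneSolution.exists_inflow_forall_le (hL : 0 < layerL ε n)
    (hF : ContinuousOn (fun p : ℝ × ℝ × ℝ => force R₁ R₂ ε p.1 p.2.2) (milneDomain (layerL ε n)))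
    (hf : IsMilneSolution R₁ R₂ ε n h (fun _ => 0) f) :
    ∃ x ∈ inflowSet, ∀ p ∈ milneDomain (layerL ε n), f p ≤ h x.1 x.2 := by
  have := pi_pos
  obtain ⟨q, hq, hmax⟩ := (isCompact_milneDomain _).exists_isMaxOn
    ⟨(0, 0, 0), ⟨le_rfl, hL.le⟩, ⟨by linarith, by linarith⟩, ⟨by linarith, by linarith⟩⟩
    hf.smooth.continuousOn
  suffices ∃ x ∈ inflowSet, f q ≤ f (0, x.1, x.2) by
    obtain ⟨x, hx, hle⟩ := this
    exact ⟨x, hx, fun p hp => (hmax hp).trans (hle.trans_eq (hf.inflow x hx))⟩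
  by_cases hin : q.1 = 0 ∧ 0 < sin q.2.1
  · exact ⟨q.2, ⟨hin.2, hq.2⟩, by rw [← hin.1]⟩
  obtain ⟨η, hη, hle⟩ := hf.exists_le_angAvg_of_isMaxOn hL hF hq hmax hin
  have hslice := eq_of_le_angAvg hf.smooth.continuousOn (fun p hp => hmax hp) hη hle
  refine ⟨(π / 2, 0), normal_mem_inflowSet,
    hf.le_normal_inflow hL hF (fun p hp => hmax hp) hη (hslice _ ?_ _ ?_).ge⟩
  exacts [⟨by linarith, le_rfl⟩, ⟨by linarith, by linarith⟩]

end Solution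

theorem IsMilneSolution.neg {R₁ R₂ ε n : ℝ} {h : ℝ → ℝ → ℝ} {S f : ℝ × ℝ × ℝ → ℝ}
    (hf : IsMilneSolution R₁ R₂ ε n h S f) : IsMilneSolution R₁ R₂ ε n (-h) (-S) (-f) where
  smooth := hf.smooth.neg
  eqn p hp := by
    have hAvg : angAvg (-f) p.1 = -angAvg f p.1 := by
      simp [angAvg, intervalIntegral.integral_neg]
    have heqn := hf.eqn p hp
    simp only [dEta, dPhi, Pi.neg_apply, deriv.fun_neg, hAvg] at heqn ⊢
    linarith
  inflow q hq := by simp [hf.inflow q hq]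
  reflect φ ψ := by simp [hf.reflect φ ψ]

theorem continuousOn_force {R₁ R₂ ε L : ℝ} (hε : 0 ≤ ε) (h₁ : ε * L < R₁) (h₂ : ε * L < R₂) :
    ContinuousOn (fun p : ℝ × ℝ × ℝ => force R₁ R₂ ε p.1 p.2.2) (milneDomain L) := by
  have hden : ∀ p ∈ milneDomain L, ε * p.1 ≤ ε * L := fun p hp =>
    mul_le_mul_of_nonneg_left hp.1.2 hε
  unfold force
  refine continuousOn_const.mul (.add (.div (by fun_prop) (by fun_prop) fun p hp => ?_)
    (.div (by fun_prop) (by fun_prop) fun p hp => ?_))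
  all_goals linarith [hden p hp]

theorem mul_layerL_lt {R ε n : ℝ} (hR : 0 < R) (hn : n < 1) (hε : 0 < ε)
    (hεR : ε ≤ (R / 2) ^ (1 - n)⁻¹) : ε * layerL ε n < R := by
  calc ε * layerL ε n = ε ^ (1 - n) := by
        rw [layerL, sub_eq_add_neg, rpow_add hε, rpow_one]
    _ ≤ ((R / 2) ^ (1 - n)⁻¹) ^ (1 - n) := rpow_le_rpow hε.le hεR (by linarith)
    _ = R / 2 := rpow_inv_rpow (by positivity) (by linarith)
    _ < R := by linarith

/-- Theorem "Milne theorem 3": maximum principle for the ε-Milne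
problem with geometric correction and zero source. -/
theorem milne_maximum_principle (R₁ R₂ n : ℝ) (hR₁ : 0 < R₁) (hR₂ : 0 < R₂)
    (hn : n ∈ Ioo (0 : ℝ) (1 / 2)) :
    ∃ ε₀ ∈ Ioo (0 : ℝ) 1, ∀ ε ∈ Ioc (0 : ℝ) ε₀, ∀ h : ℝ → ℝ → ℝ, ∀ f : ℝ × ℝ × ℝ → ℝ,
      (∃ M : ℝ, ∀ q ∈ inflowSet, |h q.1 q.2| ≤ M) →
      IsMilneSolution R₁ R₂ ε n h (fun _ => 0) f →
      ∀ p ∈ milneDomain (layerL ε n),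
        sInf ((fun q : ℝ × ℝ => h q.1 q.2) '' inflowSet) ≤ f p ∧
        f p ≤ sSup ((fun q : ℝ × ℝ => h q.1 q.2) '' inflowSet) := by
  have hR : 0 < min R₁ R₂ := lt_min hR₁ hR₂
  refine ⟨min (1 / 2) ((min R₁ R₂ / 2) ^ (1 - n)⁻¹), ⟨by positivity, by norm_num⟩, ?_⟩
  rintro ε ⟨hε, hεε₀⟩ h f ⟨M, hM⟩ hf p hp
  have hεL := mul_layerL_lt hR (by linarith [hn.2]) hε (hεε₀.trans (min_le_right _ _))
  have hL : 0 < layerL ε n := rpow_pos_of_pos hε _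
  have hF := continuousOn_force hε.le (hεL.trans_le (min_le_left _ _))
    (hεL.trans_le (min_le_right _ _))
  obtain ⟨x, hx, hfx⟩ := hf.exists_inflow_forall_le hL hF
  obtain ⟨y, hy, hfy⟩ := (by simpa [Pi.neg_def] using hf.neg :
    IsMilneSolution R₁ R₂ ε n (-h) (fun _ => 0) (-f)).exists_inflow_forall_le hL hF
  have hbdd : BddBelow ((fun q : ℝ × ℝ => h q.1 q.2) '' inflowSet) ∧
      BddAbove ((fun q : ℝ × ℝ => h q.1 q.2) '' inflowSet) :=
    ⟨⟨-M, by rintro _ ⟨q, hq, rfl⟩; exact neg_le_of_abs_le (hM q hq)⟩,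
      ⟨M, by rintro _ ⟨q, hq, rfl⟩; exact le_of_abs_le (hM q hq)⟩⟩
  exact ⟨(csInf_le hbdd.1 ⟨y, hy, rfl⟩).trans (neg_le_neg_iff.mp (hfy p hp)),
    (hfx p hp).trans (le_csSup hbdd.2 ⟨x, hx, rfl⟩)⟩

end MilneStmt
end
end

section
/- Conservation of the energy along characteristics: Let R₁, R₂, ε > 0 and fix ψ ∈ ℝ. Suppose η, φ : I → ℝ are differentiable on an interval I with 0 ≤ ε η(s) < min(R₁,R₂) for all s ∈ I, and satisfy the characteristic ODEs dη/ds = sin φ(s) and dφ/ds = F(η(s),ψ) cos φ(s). Then the energy s ↦ e^{−V(η(s),ψ)} cos φ(s) is constant on I. -/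
/-!
Since `∂V/∂η = -F`, along a characteristic the derivative of `e^{-V(η)} cos φ` is
`e^{-V(η)} (F sin φ cos φ - sin φ · F cos φ) = 0`, and a function with zero derivative on an
interval is constant.
-/

noncomputable section

open Real Set MeasureTheory

namespace MilneStmt

/-- The potential `V(η,ψ)`, with `V(0,ψ) = 0` and `∂V/∂η = -F(η,ψ)`. -/
def potential (R₁ R₂ ε η ψ : ℝ) : ℝ :=
  Real.sin ψ ^ 2 * Real.log (R₁ / (R₁ - ε * η))
    + Real.cos ψ ^ 2 * Real.log (R₂ / (R₂ - ε * η))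

/-- The weight `ζ(η,φ,ψ) = (1 - e^{-2V(η,ψ)} cos²φ)^{1/2}`. -/
def zetaWeight (R₁ R₂ ε : ℝ) (p : ℝ × ℝ × ℝ) : ℝ :=
  Real.sqrt (1 - Real.exp (-2 * potential R₁ R₂ ε p.1 p.2.2) * Real.cos p.2.1 ^ 2)

theorem _root_.Set.OrdConnected.eq_of_forall_hasDerivAt_zero {E : Type*} [NormedAddCommGroup E]
    [NormedSpace ℝ E] {I : Set ℝ} (hI : I.OrdConnected) {f : ℝ → E}
    (hf : ∀ x ∈ I, HasDerivAt f 0 x) {x y : ℝ} (hx : x ∈ I) (hy : y ∈ I) : f x = f y := by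
  have h := hI.convex.norm_image_sub_le_of_norm_hasDerivWithin_le
    (fun z hz => (hf z hz).hasDerivWithinAt) (fun _ _ => norm_zero.le) hx hy
  rw [zero_mul, norm_le_zero_iff, sub_eq_zero] at h
  exact h.symm

theorem hasDerivAt_log_div_sub_mul {R ε x : ℝ} (hR : R ≠ 0) (hx : R - ε * x ≠ 0) :
    HasDerivAt (fun y => Real.log (R / (R - ε * y))) (ε / (R - ε * x)) x := by
  have hden : HasDerivAt (fun y => R - ε * y) (-ε) x := by
    simpa using ((hasDerivAt_id x).const_mul ε).const_sub R
  have hquot := (hasDerivAt_const x R).fun_div hden hx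
  refine (hquot.log (div_ne_zero hR hx)).congr_deriv ?_
  field_simp
  ring

theorem hasDerivAt_potential (ψ : ℝ) {R₁ R₂ ε η : ℝ} (hR₁ : R₁ ≠ 0) (hR₂ : R₂ ≠ 0)
    (h₁ : R₁ - ε * η ≠ 0) (h₂ : R₂ - ε * η ≠ 0) :
    HasDerivAt (fun x => potential R₁ R₂ ε x ψ) (-force R₁ R₂ ε η ψ) η := by
  refine (((hasDerivAt_log_div_sub_mul hR₁ h₁).const_mul (Real.sin ψ ^ 2)).add
    ((hasDerivAt_log_div_sub_mul hR₂ h₂).const_mul (Real.cos ψ ^ 2))).congr_deriv ?_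
  simp only [force]
  ring

theorem hasDerivAt_energy_eq_zero {V F η φ : ℝ → ℝ} {s : ℝ}
    (hV : HasDerivAt V (-F (η s)) (η s)) (hη : HasDerivAt η (Real.sin (φ s)) s)
    (hφ : HasDerivAt φ (F (η s) * Real.cos (φ s)) s) :
    HasDerivAt (fun u => Real.exp (-V (η u)) * Real.cos (φ u)) 0 s := by
  refine ((hV.comp s hη).neg.exp.mul hφ.cos).congr_deriv ?_
  ring

theorem energy_conserved_along_characteristics_general (R₁ R₂ ε ψ : ℝ)
    (hR₁ : 0 < R₁) (hR₂ : 0 < R₂)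
    (I : Set ℝ) (hI : I.OrdConnected) (η φ : ℝ → ℝ)
    (hdom : ∀ s ∈ I, 0 ≤ ε * η s ∧ ε * η s < min R₁ R₂)
    (hηode : ∀ s ∈ I, HasDerivAt η (Real.sin (φ s)) s)
    (hφode : ∀ s ∈ I, HasDerivAt φ (force R₁ R₂ ε (η s) ψ * Real.cos (φ s)) s) :
    ∀ s ∈ I, ∀ t ∈ I,
      Real.exp (-potential R₁ R₂ ε (η s) ψ) * Real.cos (φ s)
        = Real.exp (-potential R₁ R₂ ε (η t) ψ) * Real.cos (φ t) := by
  have hderiv (s : ℝ) (hs : s ∈ I) :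
      HasDerivAt (fun u => Real.exp (-potential R₁ R₂ ε (η u) ψ) * Real.cos (φ u)) 0 s := by
    have hlt := (hdom s hs).2
    have h₁ : R₁ - ε * η s ≠ 0 := (sub_pos.2 (hlt.trans_le (min_le_left R₁ R₂))).ne'
    have h₂ : R₂ - ε * η s ≠ 0 := (sub_pos.2 (hlt.trans_le (min_le_right R₁ R₂))).ne'
    exact hasDerivAt_energy_eq_zero (F := fun x => force R₁ R₂ ε x ψ)
      (hasDerivAt_potential ψ hR₁.ne' hR₂.ne' h₁ h₂)
      (hηode s hs) (hφode s hs)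
  exact fun s hs t ht => hI.eq_of_forall_hasDerivAt_zero hderiv hs ht

/-- conservation of the energy `E = e^{-V} cos φ` along the
characteristics `dη/ds = sin φ`, `dφ/ds = F(η,ψ) cos φ`. -/
theorem energy_conserved_along_characteristics (R₁ R₂ ε ψ : ℝ)
    (hR₁ : 0 < R₁) (hR₂ : 0 < R₂) (hε : 0 < ε)
    (I : Set ℝ) (hI : I.OrdConnected) (η φ : ℝ → ℝ)
    (hdom : ∀ s ∈ I, 0 ≤ ε * η s ∧ ε * η s < min R₁ R₂)
    (hηode : ∀ s ∈ I, HasDerivAt η (Real.sin (φ s)) s)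
    (hφode : ∀ s ∈ I, HasDerivAt φ (force R₁ R₂ ε (η s) ψ * Real.cos (φ s)) s) :
    ∀ s ∈ I, ∀ t ∈ I,
      Real.exp (-potential R₁ R₂ ε (η s) ψ) * Real.cos (φ s)
        = Real.exp (-potential R₁ R₂ ε (η t) ψ) * Real.cos (φ t) :=
  energy_conserved_along_characteristics_general R₁ R₂ ε ψ hR₁ hR₂ I hI η φ hdom hηode hφode

end MilneStmt
end
end
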